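/- arXiv:1011.0412 — 2 statements merged into one kernel-verified Lean document; each statement's English description precedes it below -/
import Mathlib

section
/- Let n ≥ 2 be an integer and let x₀ ∈ EuclideanSpace ℝ (Fin n) with ‖x₀‖ = 1. Define the truncated cone Σ := {x : ‖x − x₀‖ < 1/2 and ⟪x₀ − x, x₀⟫ > (3/4)·‖x − x₀‖}. Then Σ is open and nonempty, Σ ⊆ B (the open unit ball), and for every x ∈ Σ one has Metric.infDist x Bᶜ ≥ ‖x − x₀‖ / 2. -/
open MeasureTheory Metric
open scoped ENNReal NNReal RealInnerProductSpace

noncomputable section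

/-- The open unit ball in `EuclideanSpace ℝ (Fin n)`. -/
def Ball (n : ℕ) : Set (EuclideanSpace ℝ (Fin n)) := Metric.ball 0 1

/-- The truncated revolution cone with vertex `x₀`. -/
def Cone (n : ℕ) (x₀ : EuclideanSpace ℝ (Fin n)) : Set (EuclideanSpace ℝ (Fin n)) :=
  {x | ‖x - x₀‖ < 1 / 2 ∧ (3 / 4 : ℝ) * ‖x - x₀‖ < ⟪x₀ - x, x₀⟫}

/-! In the cone, `‖x‖² = 1 - 2⟪x₀ - x, x₀⟫ + r² < 1 - 3r/2 + r² ≤ (1 - r/2)²` with `r = ‖x - x₀‖`,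
the last step because `r ≤ 2/3`. Hence every point of the cone is at distance at least `r/2` from
the complement of the unit ball, and lies inside the ball since `r > 0` there. -/

theorem Metric.sub_dist_le_infDist_compl_ball {α : Type*} [PseudoMetricSpace α] {c x : α} {r : ℝ}
    (h : (ball c r)ᶜ.Nonempty) : r - dist x c ≤ infDist x (ball c r)ᶜ := by
  refine (le_infDist h).2 fun y hy => ?_
  have hry : r ≤ dist y c := not_lt.1 hy
  linarith [dist_triangle y x c, dist_comm x y]

section InnerProductSpace

variable {E : Type*} [NormedAddCommGroup E] [InnerProductSpace ℝ E]

theorem norm_le_one_sub_half_norm_sub {x x₀ : E} (hx₀ : ‖x₀‖ = 1) (hr : ‖x - x₀‖ ≤ 2 / 3)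
    (hinner : (3 / 4 : ℝ) * ‖x - x₀‖ ≤ ⟪x₀ - x, x₀⟫) : ‖x‖ ≤ 1 - ‖x - x₀‖ / 2 := by
  set r := ‖x - x₀‖
  have hnorm_sq : ‖x‖ ^ 2 = 1 - 2 * ⟪x₀ - x, x₀⟫ + r ^ 2 := by
    have hx : x = x₀ - (x₀ - x) := by abel
    rw [hx, norm_sub_sq_real, real_inner_comm, norm_sub_rev, hx₀, ← hx]
    ring
  have hsq : ‖x‖ ^ 2 ≤ (1 - r / 2) ^ 2 := by nlinarith [norm_nonneg (x - x₀)]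
  exact abs_le_of_sq_le_sq' hsq (by linarith) |>.2

end InnerProductSpace

variable {n : ℕ} {x₀ : EuclideanSpace ℝ (Fin n)}

theorem isOpen_cone : IsOpen (Cone n x₀) := by
  have hdist : Continuous fun x : EuclideanSpace ℝ (Fin n) => ‖x - x₀‖ := by fun_prop
  exact (isOpen_lt hdist continuous_const).inter <| isOpen_lt (continuous_const.mul hdist) <|
    (continuous_const.sub continuous_id).inner continuous_const

theorem three_quarters_smul_mem_cone (hx₀ : ‖x₀‖ = 1) : (3 / 4 : ℝ) • x₀ ∈ Cone n x₀ := by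
  have hsub : (3 / 4 : ℝ) • x₀ - x₀ = (-(1 / 4) : ℝ) • x₀ := by module
  have hsub' : x₀ - (3 / 4 : ℝ) • x₀ = (1 / 4 : ℝ) • x₀ := by module
  refine ⟨?_, ?_⟩ <;>
    simp only [hsub, hsub', norm_smul, real_inner_smul_left, real_inner_self_eq_norm_sq, hx₀] <;>
    norm_num

theorem norm_sub_pos_of_mem_cone {x : EuclideanSpace ℝ (Fin n)} (hx : x ∈ Cone n x₀) :
    0 < ‖x - x₀‖ := by
  refine norm_pos_iff.2 (sub_ne_zero.2 fun hxx => ?_)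
  have hinner := hx.2
  simp [hxx] at hinner

theorem norm_le_of_mem_cone (hx₀ : ‖x₀‖ = 1) {x : EuclideanSpace ℝ (Fin n)} (hx : x ∈ Cone n x₀) :
    ‖x‖ ≤ 1 - ‖x - x₀‖ / 2 :=
  norm_le_one_sub_half_norm_sub hx₀ (by linarith [hx.1]) hx.2.le

theorem cone_geometry_general (n : ℕ) (x₀ : EuclideanSpace ℝ (Fin n))
    (hx₀ : ‖x₀‖ = 1) :
    IsOpen (Cone n x₀) ∧ (Cone n x₀).Nonempty ∧ Cone n x₀ ⊆ Ball n ∧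
      ∀ x ∈ Cone n x₀, ‖x - x₀‖ / 2 ≤ Metric.infDist x (Ball n)ᶜ := by
  refine ⟨isOpen_cone, ⟨_, three_quarters_smul_mem_cone hx₀⟩, fun x hx => ?_, fun x hx => ?_⟩
  · rw [Ball, mem_ball, dist_zero_right]
    linarith [norm_le_of_mem_cone hx₀ hx, norm_sub_pos_of_mem_cone hx]
  · have hcompl : (ball (0 : EuclideanSpace ℝ (Fin n)) 1)ᶜ.Nonempty := ⟨x₀, by simp [hx₀]⟩
    have hdist := sub_dist_le_infDist_compl_ball (x := x) hcompl
    rw [dist_zero_right] at hdist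
    rw [Ball]
    linarith [norm_le_of_mem_cone hx₀ hx]

theorem cone_geometry (n : ℕ) (hn : 2 ≤ n) (x₀ : EuclideanSpace ℝ (Fin n))
    (hx₀ : ‖x₀‖ = 1) :
    IsOpen (Cone n x₀) ∧ (Cone n x₀).Nonempty ∧ Cone n x₀ ⊆ Ball n ∧
      ∀ x ∈ Cone n x₀, ‖x - x₀‖ / 2 ≤ Metric.infDist x (Ball n)ᶜ :=
  cone_geometry_general n x₀ hx₀
end
end

section
/- Let n ≥ 2 and m ≥ 1 be integers, let x₀ ∈ EuclideanSpace ℝ (Fin n) with ‖x₀‖ = 1, and let Σ := {x : ‖x − x₀‖ < 1/2 and ⟪x₀ − x, x₀⟫ > (3/4)·‖x − x₀‖}. Let α > 0 and q ≥ 1 be reals with α·q ≥ n + m. Then ∫_Σ ‖x − x₀‖^{−αq} · d(x)^m dx = ∞, where d(x) := Metric.infDist x Bᶜ. -/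
open MeasureTheory Metric
open scoped ENNReal NNReal RealInnerProductSpace

noncomputable section

/-- Distance to the boundary of the unit ball. -/
def dB (n : ℕ) (x : EuclideanSpace ℝ (Fin n)) : ℝ := Metric.infDist x (Ball n)ᶜ

theorem singular_solution_not_integrable (n m : ℕ) (hn : 2 ≤ n) (hm : 1 ≤ m)
    (x₀ : EuclideanSpace ℝ (Fin n)) (hx₀ : ‖x₀‖ = 1)
    (α q : ℝ) (hα : 0 < α) (hq : 1 ≤ q) (h : (n : ℝ) + m ≤ α * q) :
    ∫⁻ x in Cone n x₀, ENNReal.ofReal (‖x - x₀‖ ^ (-(α * q)) * dB n x ^ m) = ⊤ := by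
  have hx₀ne : x₀ ≠ 0 := by
    intro h0; rw [h0, norm_zero] at hx₀; norm_num at hx₀
  haveI : Nontrivial (EuclideanSpace ℝ (Fin n)) := nontrivial_of_ne x₀ 0 hx₀ne
  set f : EuclideanSpace ℝ (Fin n) → ℝ≥0∞ :=
    fun x => ENNReal.ofReal (‖x - x₀‖ ^ (-(α * q)) * dB n x ^ m) with hf
  set t : ℕ → ℝ := fun k => (1 / 2 : ℝ) ^ (k + 2) with ht
  have htpos : ∀ k, 0 < t k := fun k => by positivity
  have htle : ∀ k, t k ≤ 1 / 4 := by
    intro k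
    have : (1 / 2 : ℝ) ^ (k + 2) ≤ (1 / 2 : ℝ) ^ 2 :=
      pow_le_pow_of_le_one (by norm_num) (by norm_num) (by omega)
    simpa [ht] using this.trans_eq (by norm_num)
  have htmono : ∀ k j, k < j → t j ≤ t k / 2 := by
    intro k j hkj
    have : (1 / 2 : ℝ) ^ (j + 2) ≤ (1 / 2 : ℝ) ^ (k + 3) :=
      pow_le_pow_of_le_one (by norm_num) (by norm_num) (by omega)
    calc t j ≤ (1 / 2 : ℝ) ^ (k + 3) := this
      _ = t k / 2 := by rw [ht]; simp [pow_succ]; ring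
  set B : ℕ → Set (EuclideanSpace ℝ (Fin n)) :=
    fun k => Metric.ball ((1 - t k) • x₀) (t k / 8) with hB
  -- basic facts for points of B k
  have hnorm_center : ∀ k, ‖(1 - t k) • x₀ - x₀‖ = t k := by
    intro k
    have : (1 - t k) • x₀ - x₀ = (-(t k)) • x₀ := by
      rw [sub_smul, one_smul, neg_smul]; abel
    rw [this, norm_smul, hx₀]
    simp [abs_of_nonneg (htpos k).le]
  have hdist1 : ∀ k x, x ∈ B k → 7 * t k / 8 ≤ ‖x - x₀‖ ∧ ‖x - x₀‖ ≤ 9 * t k / 8 := by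
    intro k x hx
    rw [hB, Metric.mem_ball, dist_eq_norm] at hx
    have h1 : ‖x - x₀‖ ≤ ‖x - (1 - t k) • x₀‖ + ‖(1 - t k) • x₀ - x₀‖ := by
      simpa using norm_sub_le_norm_sub_add_norm_sub x ((1 - t k) • x₀) x₀
    have h2 : ‖(1 - t k) • x₀ - x₀‖ ≤ ‖(1 - t k) • x₀ - x‖ + ‖x - x₀‖ := by
      simpa using norm_sub_le_norm_sub_add_norm_sub ((1 - t k) • x₀) x x₀
    have hx' : ‖(1 - t k) • x₀ - x‖ < t k / 8 := by rw [norm_sub_rev]; exact hx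
    rw [norm_sub_rev x ((1 - t k) • x₀)] at h1
    rw [hnorm_center k] at h1 h2
    constructor <;> linarith
  have hsub : ∀ k, B k ⊆ Cone n x₀ := by
    intro k x hx
    obtain ⟨hlo, hhi⟩ := hdist1 k x hx
    have htk := htpos k
    have htk4 := htle k
    rw [hB, Metric.mem_ball, dist_eq_norm] at hx
    constructor
    · linarith
    · -- inner product bound
      have e1 : x₀ - x = t k • x₀ + ((1 - t k) • x₀ - x) := by
        rw [sub_smul, one_smul]; abel
      have e2 : ⟪x₀ - x, x₀⟫ = t k * ⟪x₀, x₀⟫ + ⟪(1 - t k) • x₀ - x, x₀⟫ := by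
        rw [e1, inner_add_left, real_inner_smul_left]
      have e3 : ⟪x₀, x₀⟫ = 1 := by
        rw [real_inner_self_eq_norm_sq, hx₀]; norm_num
      have e4 : |⟪(1 - t k) • x₀ - x, x₀⟫| ≤ ‖(1 - t k) • x₀ - x‖ * ‖x₀‖ :=
        abs_real_inner_le_norm _ _
      rw [hx₀, mul_one] at e4
      rw [norm_sub_rev] at hx
      have e5 : -(t k / 8) ≤ ⟪(1 - t k) • x₀ - x, x₀⟫ := by
        have := neg_le_of_abs_le e4
        linarith
      rw [e2, e3]
      linarith
  have hdB : ∀ k x, x ∈ B k → t k / 2 ≤ dB n x := by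
    intro k x hx
    have htk := htpos k
    have htk4 := htle k
    rw [hB, Metric.mem_ball, dist_eq_norm] at hx
    have hxn : ‖x‖ ≤ 1 - 7 * t k / 8 := by
      have h1 : ‖x‖ ≤ ‖x - (1 - t k) • x₀‖ + ‖(1 - t k) • x₀‖ := by
        simpa using norm_add_le (x - (1 - t k) • x₀) ((1 - t k) • x₀)
      have h2 : ‖(1 - t k) • x₀‖ = 1 - t k := by
        rw [norm_smul, hx₀, mul_one, Real.norm_eq_abs, abs_of_nonneg (by linarith)]
      linarith
    have hne : ((Ball n)ᶜ : Set (EuclideanSpace ℝ (Fin n))).Nonempty := by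
      refine ⟨x₀, ?_⟩
      simp [Ball, Metric.mem_ball, dist_eq_norm, hx₀]
    haveI : Nonempty ((Ball n)ᶜ : Set (EuclideanSpace ℝ (Fin n))) := hne.to_subtype
    rw [dB, Metric.infDist_eq_iInf]
    refine le_ciInf fun y => ?_
    have hy : 1 ≤ ‖(y : EuclideanSpace ℝ (Fin n))‖ := by
      have := y.2
      simp only [Ball, Set.mem_compl_iff, Metric.mem_ball, dist_eq_norm, sub_zero, not_lt] at this
      exact this
    have : ‖(y : EuclideanSpace ℝ (Fin n))‖ - ‖x‖ ≤ dist x (y : EuclideanSpace ℝ (Fin n)) := by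
      rw [dist_eq_norm, norm_sub_rev]
      have := norm_sub_norm_le ((y : EuclideanSpace ℝ (Fin n)) - x + x) x
      simpa using (norm_sub_norm_le (y : EuclideanSpace ℝ (Fin n)) x).trans
        (le_of_eq (by rw [norm_sub_rev]))
    linarith
  -- disjointness
  have hdisj : Pairwise (Function.onFun Disjoint B) := by
    have key : ∀ k j, k < j → Disjoint (B k) (B j) := by
      intro k j hkj
      refine Metric.ball_disjoint_ball ?_
      have hd : dist ((1 - t k) • x₀) ((1 - t j) • x₀) = t k - t j := by
        rw [dist_eq_norm]
        have : (1 - t k) • x₀ - (1 - t j) • x₀ = (t j - t k) • x₀ := by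
          simp only [sub_smul, one_smul]; abel
        rw [this, norm_smul, hx₀, mul_one, Real.norm_eq_abs,
          abs_of_nonpos (by linarith [htmono k j hkj, (htpos k).le, htpos j])]
        ring
      rw [hd]
      have h1 := htmono k j hkj
      have h2 := htpos j
      have h3 := htpos k
      linarith
    intro k j hkj
    rcases lt_or_gt_of_ne hkj with h' | h'
    · exact key k j h'
    · exact (key j k h').symm
  -- lower bound for integral over each ball
  set ν : ℝ≥0∞ := volume (Metric.ball (0 : EuclideanSpace ℝ (Fin n)) 1) with hν
  have hνpos : 0 < ν := Metric.measure_ball_pos _ _ one_pos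
  have hνfin : ν < ⊤ := measure_ball_lt_top
  set C₀ : ℝ := (2 : ℝ) ^ (-(α * q)) * (1 / 2 : ℝ) ^ m * (1 / 8 : ℝ) ^ n with hC₀
  have hC₀pos : 0 < C₀ := by positivity
  set C : ℝ≥0∞ := ENNReal.ofReal C₀ * ν with hC
  have hCne : C ≠ 0 := by
    rw [hC]
    exact mul_ne_zero (by simp [ENNReal.ofReal_eq_zero, not_le, hC₀pos]) hνpos.ne'
  have hball : ∀ k, C ≤ ∫⁻ x in B k, f x := by
    intro k
    have htk := htpos k
    have htk1 : t k ≤ 1 := (htle k).trans (by norm_num)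
    -- pointwise bound on B k
    have hpt : ∀ x ∈ B k,
        ENNReal.ofReal ((2 * t k) ^ (-(α * q)) * (t k / 2) ^ m) ≤ f x := by
      intro x hx
      obtain ⟨hlo, hhi⟩ := hdist1 k x hx
      have hxpos : 0 < ‖x - x₀‖ := lt_of_lt_of_le (by linarith) hlo
      have h1 : (2 * t k) ^ (-(α * q)) ≤ ‖x - x₀‖ ^ (-(α * q)) :=
        Real.rpow_le_rpow_of_nonpos hxpos (by linarith)
          (by nlinarith [hα.le, hq])
      have h2 : (t k / 2) ^ m ≤ dB n x ^ m :=
        pow_le_pow_left₀ (by positivity) (hdB k x hx) m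
      refine ENNReal.ofReal_le_ofReal ?_
      have hd0 : (0:ℝ) ≤ t k / 2 := by positivity
      exact mul_le_mul h1 h2 (by positivity) (Real.rpow_nonneg (by positivity) _)
    have hint : ENNReal.ofReal ((2 * t k) ^ (-(α * q)) * (t k / 2) ^ m) * volume (B k)
        ≤ ∫⁻ x in B k, f x := by
      rw [← MeasureTheory.setLIntegral_const (B k) _]
      exact MeasureTheory.setLIntegral_mono' measurableSet_ball hpt
    have hvol : volume (B k) = ENNReal.ofReal ((t k / 8) ^ n) * ν := by
      rw [hB]
      rw [MeasureTheory.Measure.addHaar_ball _ _ (by positivity : (0:ℝ) ≤ t k / 8)]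
      congr 1
      · rw [finrank_euclideanSpace, Fintype.card_fin]
    refine le_trans ?_ hint
    rw [hvol, ← mul_assoc, ← ENNReal.ofReal_mul (by positivity)]
    rw [hC]
    refine mul_le_mul_left (ENNReal.ofReal_le_ofReal ?_) ν
    -- real inequality: C₀ ≤ (2 t)^(-(αq)) * (t/2)^m * (t/8)^n
    have e1 : (2 * t k) ^ (-(α * q)) = (2:ℝ) ^ (-(α * q)) * t k ^ (-(α * q)) :=
      Real.mul_rpow (by norm_num) htk.le
    have e2 : (t k / 2 : ℝ) ^ m = (1 / 2 : ℝ) ^ m * t k ^ m := by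
      rw [← mul_pow]; ring_nf
    have e3 : (t k / 8 : ℝ) ^ n = (1 / 8 : ℝ) ^ n * t k ^ n := by
      rw [← mul_pow]; ring_nf
    have e4 : t k ^ (-(α * q)) * (t k ^ m * t k ^ n) = t k ^ (-(α * q) + (m + n : ℝ)) := by
      rw [← Real.rpow_natCast (t k) m, ← Real.rpow_natCast (t k) n,
        ← Real.rpow_add htk, ← Real.rpow_add htk]
    have e5 : (1:ℝ) ≤ t k ^ (-(α * q) + (m + n : ℝ)) :=
      Real.one_le_rpow_of_pos_of_le_one_of_nonpos htk htk1 (by push_cast; linarith)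
    calc C₀ = (2:ℝ) ^ (-(α * q)) * (1 / 2 : ℝ) ^ m * (1 / 8 : ℝ) ^ n * 1 := by rw [hC₀]; ring
      _ ≤ (2:ℝ) ^ (-(α * q)) * (1 / 2 : ℝ) ^ m * (1 / 8 : ℝ) ^ n *
          (t k ^ (-(α * q) + (m + n : ℝ))) := by
          refine mul_le_mul_of_nonneg_left e5 ?_
          positivity
      _ = (2 * t k) ^ (-(α * q)) * (t k / 2) ^ m * (t k / 8) ^ n := by
          rw [e1, e2, e3, ← e4]; ring
  -- put it together
  refine top_le_iff.mp ?_
  calc (⊤ : ℝ≥0∞) = ∑' _ : ℕ, C := (ENNReal.tsum_const_eq_top_of_ne_zero hCne).symm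
    _ ≤ ∑' k, ∫⁻ x in B k, f x := ENNReal.tsum_le_tsum hball
    _ = ∫⁻ x in ⋃ k, B k, f x :=
        (MeasureTheory.lintegral_iUnion (fun k => measurableSet_ball) hdisj f).symm
    _ ≤ ∫⁻ x in Cone n x₀, f x :=
        MeasureTheory.lintegral_mono_set (Set.iUnion_subset hsub)
end
end
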